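/- arXiv:2302.05782 — 3 statements merged into one kernel-verified Lean document; each statement's English description precedes it below -/
import Mathlib

section
/- Let C and D be triangulated categories, each equipped with a homologically finite t-structure (every object has only finitely many nonzero cohomology objects with respect to the t-structure), with hearts C♥ and D♥, and each equipped with a t-exact duality functor, D_C on C and D_D on D. Let φ : C → D be an exact (triangulated) fully faithful functor such that φ ∘ D_C ≅ D_D ∘ φ. Assume that every object of C♥ and every object of D♥ has finite length, and that every simple object L of D♥ satisfies D_D(L) ≅ L. Then φ is t-exact, and φ sends every simple object of C♥ to a simple object of D♥. -/
/-!
If `φ S` is not `≤ 0` for some `S ≤ 0`, let `b > 0` be its top degree and `L` a simple quotient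
of `H^b (φ S)`. As `L ≅ D L`, the map `φ S ⟶ L⟦-b⟧` followed by its own dual is a map
`φ S ⟶ (D (φ S))⟦-2b⟧ ≅ φ ((D S)⟦-2b⟧)`. It is nonzero, because an epimorphism of the heart can
be cancelled against objects `≥ b`; but by full faithfulness it comes from a map
`S ⟶ (D S)⟦-2b⟧`, which vanishes as the target is `≥ 2b`. The `≥ 0` half follows by duality.
For `S` simple in the heart, the same composite `φ S ⟶ L ≅ D L ⟶ D (φ S) ≅ φ (D S)` is nonzero,
hence comes from an isomorphism between the simple objects `S` and `D S`, so `φ S ≅ L`.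
-/

open CategoryTheory Limits Triangulated CategoryTheory.Pretriangulated
open CategoryTheory.Pretriangulated.Opposite

/-- An object of an abelian category has finite length if it admits a finite filtration
`0 = X₀ ⊆ X₁ ⊆ ⋯ ⊆ Xₙ = X` whose successive quotients are simple; equivalently,
it is zero or an extension of a simple object by a finite length object. -/
inductive CategoryTheory.IsFiniteLength {A : Type*} [Category A] [Abelian A] : A → Prop
  | of_isZero (X : A) : IsZero X → CategoryTheory.IsFiniteLength X
  | of_shortExact (S : ShortComplex A) (hS : S.ShortExact)
      (h₁ : CategoryTheory.IsFiniteLength S.X₁) (h₃ : Simple S.X₃) :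
      CategoryTheory.IsFiniteLength S.X₂

namespace CategoryTheory

lemma IsFiniteLength.exists_epi_simple {A : Type*} [Category A] [Abelian A] {X : A}
    (h : IsFiniteLength X) (hX : ¬ IsZero X) : ∃ (L : A) (_ : Simple L) (ε : X ⟶ L), Epi ε := by
  cases h with
  | of_isZero _ h₀ => exact absurd h₀ hX
  | of_shortExact S hS _ h₃ => exact ⟨S.X₃, h₃, S.g, hS.epi_g⟩

section ZeroMorphisms

variable {A B : Type*} [Category A] [Category B] [HasZeroMorphisms A] [HasZeroMorphisms B]

lemma Functor.isZero_of_isZero_obj (F : A ⥤ B) [F.Faithful] [F.PreservesZeroMorphisms] {X : A}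
    (h : IsZero (F.obj X)) : IsZero X := by
  rw [IsZero.iff_id_eq_zero, ← F.map_eq_zero_iff, F.map_id]
  exact h.eq_of_src _ _

lemma Functor.preimage_eq_zero_iff (F : A ⥤ B) [F.Full] [F.Faithful] [F.PreservesZeroMorphisms]
    {X Y : A} (f : F.obj X ⟶ F.obj Y) : F.preimage f = 0 ↔ f = 0 := by
  rw [← F.map_eq_zero_iff, F.map_preimage]

lemma Functor.unop_map_eq_zero_iff (F : A ⥤ Bᵒᵖ) [F.Faithful] [F.PreservesZeroMorphisms]
    {X Y : A} (f : X ⟶ Y) : (F.map f).unop = 0 ↔ f = 0 := by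
  rw [← unop_zero, Quiver.Hom.unop_inj.eq_iff, F.map_eq_zero_iff]

end ZeroMorphisms

lemma Functor.essImage_eq_inf {A B : Type*} [Category A] [Category B] (F : A ⥤ B)
    {P Q : ObjectProperty B} [P.IsClosedUnderIsomorphisms] [Q.IsClosedUnderIsomorphisms]
    (h₁ : ∀ X, P (F.obj X) ∧ Q (F.obj X)) (h₂ : ∀ Y, P Y → Q Y → ∃ X, Nonempty (F.obj X ≅ Y)) :
    F.essImage = P ⊓ Q := by
  ext Y
  exact ⟨fun ⟨X, ⟨e⟩⟩ ↦ ⟨P.prop_of_iso e (h₁ X).1, Q.prop_of_iso e (h₁ X).2⟩,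
    fun ⟨hP, hQ⟩ ↦ h₂ Y hP hQ⟩

lemma isIso_of_isIso_map_comp {A B : Type*} [Category A] [Abelian A] [Category B]
    (F : A ⥤ B) [F.Faithful] {M L : A} (ε : M ⟶ L) [Epi ε] {Y : B} (g : F.obj L ⟶ Y)
    [IsIso (F.map ε ≫ g)] : IsIso ε := by
  have : IsSplitMono (F.map ε) :=
    IsSplitMono.mk' ⟨g ≫ inv (F.map ε ≫ g), by rw [← Category.assoc, IsIso.hom_inv_id]⟩
  have : Mono ε := F.mono_of_mono_map inferInstance
  exact isIso_of_mono_of_epi ε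

/-- Dualizing a mono `f : Y ⟶ S'` and a map `g : S' ⟶ Z` with `f ≫ g = 0` gives maps
`Z' ⟶ S ⟶ Y'` composing to zero, the first of which is epi as soon as it is nonzero. -/
lemma simple_of_unop_obj_iso {A B : Type*} [Category A] [Abelian A] [Category B] [Preadditive B]
    (ι : A ⥤ B) [ι.Full] [ι.Faithful] (Dl : B ⥤ Bᵒᵖ) [Dl.Faithful] [Dl.PreservesZeroMorphisms]
    (hDl : ∀ X : A, ∃ X' : A, Nonempty (ι.obj X' ≅ (Dl.obj (ι.obj X)).unop))
    {S S' : A} [Simple S] (e : (Dl.obj (ι.obj S')).unop ≅ ι.obj S) : Simple S' := by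
  refine ⟨fun {Y} f _ ↦ ⟨fun _ hf ↦ Simple.not_isZero S ?_, fun hf ↦ ?_⟩⟩
  · subst hf
    have : IsZero S' := by rw [IsZero.iff_id_eq_zero, ← IsIso.inv_hom_id (0 : Y ⟶ S'), comp_zero]
    exact ι.isZero_of_isZero_obj (((Dl.map_isZero (ι.map_isZero this)).unop).of_iso e.symm)
  obtain ⟨Y', ⟨eY⟩⟩ := hDl Y
  let f' : S ⟶ Y' := ι.preimage (e.inv ≫ (Dl.map (ι.map f)).unop ≫ eY.inv)
  have hf' : f' ≠ 0 := by
    simpa [f', Functor.preimage_eq_zero_iff, Functor.unop_map_eq_zero_iff,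
      Functor.map_eq_zero_iff] using hf
  have : Epi f := Preadditive.epi_of_cancel_zero f fun {Z} g hfg ↦ by
    obtain ⟨Z', ⟨eZ⟩⟩ := hDl Z
    let g' : Z' ⟶ S := ι.preimage (eZ.hom ≫ (Dl.map (ι.map g)).unop ≫ e.hom)
    have hgf : (Dl.map (ι.map g)).unop ≫ (Dl.map (ι.map f)).unop = 0 := by
      rw [← unop_comp, ← Functor.map_comp, ← Functor.map_comp, hfg, Functor.map_zero,
        Functor.map_zero, unop_zero]
    have hg'f' : g' ≫ f' = 0 := by
      apply ι.map_injective
      simp only [g', f', Functor.map_comp, Functor.map_preimage, Category.assoc,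
        Iso.hom_inv_id_assoc, reassoc_of% hgf, zero_comp, comp_zero, Functor.map_zero]
    by_contra hg
    have hg' : g' ≠ 0 := by
      simpa [g', Functor.preimage_eq_zero_iff, Functor.unop_map_eq_zero_iff,
        Functor.map_eq_zero_iff] using hg
    have : Epi g' := epi_of_nonzero_to_simple hg'
    exact hf' (zero_of_epi_comp g' hg'f')
  exact isIso_of_mono_of_epi f

noncomputable def Functor.unopObjShiftIso {C : Type*} [Category C] [HasShift C ℤ]
    (Dl : C ⥤ Cᵒᵖ) [Dl.CommShift ℤ] (X : C) (a b : ℤ) (h : a + b = 0) :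
    (Dl.obj (X⟦a⟧)).unop ≅ (Dl.obj X).unop⟦b⟧ :=
  ((Dl.commShiftIso a).app X ≪≫ (shiftFunctorOpIso C a b h).app (Dl.obj X)).unop.symm

end CategoryTheory

namespace CategoryTheory.Triangulated.TStructure

variable {C : Type*} [Category C] [HasZeroObject C] [Preadditive C] [HasShift C ℤ]
  [∀ n : ℤ, (shiftFunctor C n).Additive] [Pretriangulated C] (t : TStructure C)

lemma exists_isLE_not_isLE_pred {X : C} (hX : ∃ a b : ℤ, t.ge a X ∧ t.le b X) {n : ℤ}
    (h : ¬ t.IsLE X n) : ∃ b, n < b ∧ t.IsLE X b ∧ ¬ t.IsLE X (b - 1) := by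
  obtain ⟨a, b₀, hXa, hXb⟩ := hX
  have : t.IsGE X a := ⟨hXa⟩
  have hbdd : ∀ z, t.IsLE X z → a ≤ z := fun z _ ↦ by
    by_contra! hza
    exact h (t.isLE_of_isZero (t.isZero X z a hza) n)
  obtain ⟨b, hb, hmin⟩ := Int.exists_least_of_bdd ⟨a, hbdd⟩ ⟨b₀, ⟨hXb⟩⟩
  refine ⟨b, ?_, hb, fun hb' ↦ by linarith [hmin _ hb']⟩
  by_contra! hbn
  exact h (t.isLE_of_le X b n hbn)

lemma essImage_comp_shiftFunctor {H : Type*} [Category H] (ι : H ⥤ C)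
    (hι : ι.essImage = t.heart) (n : ℤ) :
    (ι ⋙ shiftFunctor C (-n)).essImage = t.le n ⊓ t.ge n := by
  ext Y
  constructor
  · rintro ⟨X, ⟨e⟩⟩
    have hX : t.heart (ι.obj X) := hι ▸ ι.obj_mem_essImage X
    exact ⟨(t.le n).prop_of_iso e (t.le_shift 0 (-n) n (by omega) _ hX.1),
      (t.ge n).prop_of_iso e (t.ge_shift 0 (-n) n (by omega) _ hX.2)⟩
  · rintro ⟨hY₁, hY₂⟩
    obtain ⟨X, ⟨e⟩⟩ : ι.essImage (Y⟦n⟧) :=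
      hι ▸ ⟨t.le_shift n n 0 (by omega) Y hY₁, t.ge_shift n n 0 (by omega) Y hY₂⟩
    exact ⟨X, ⟨(shiftFunctor C (-n)).mapIso e ≪≫ (shiftFunctorCompIsoId C n (-n) (by omega)).app Y⟩⟩

section Heart

variable {t} {H : Type*} [Category H] {ι : H ⥤ C} {n : ℤ}

lemma isLE_obj_of_essImage_eq (hι : ι.essImage = t.le n ⊓ t.ge n) (X : H) :
    t.IsLE (ι.obj X) n :=
  ⟨(show (t.le n ⊓ t.ge n) (ι.obj X) from hι ▸ ι.obj_mem_essImage X).1⟩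

lemma isGE_obj_of_essImage_eq (hι : ι.essImage = t.le n ⊓ t.ge n) (X : H) :
    t.IsGE (ι.obj X) n :=
  ⟨(show (t.le n ⊓ t.ge n) (ι.obj X) from hι ▸ ι.obj_mem_essImage X).2⟩

variable [Abelian H] [ι.Full] [ι.Faithful]

/-- A map from the heart (in degree `n`) to `Y ≥ n` factors through the truncation `τ≤n Y`,
which lies in the heart, so epimorphisms of the heart can be cancelled against it. -/
lemma eq_zero_of_map_epi_comp_eq_zero (hι : ι.essImage = t.le n ⊓ t.ge n) {M L : H}
    (ε : M ⟶ L) [Epi ε] {Y : C} [t.IsGE Y n] {g : ι.obj L ⟶ Y} (h : ι.map ε ≫ g = 0) :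
    g = 0 := by
  have := isLE_obj_of_essImage_eq hι
  obtain ⟨E, F, hE, hF, p, q, δ, hT⟩ := t.exists_triangle Y n (n + 1) rfl
  have : t.IsLE E n := ⟨hE⟩
  have : t.IsGE F (n + 1) := ⟨hF⟩
  have : t.IsGE (F⟦(-1 : ℤ)⟧) (n + 2) := t.isGE_shift F (n + 1) (-1) (n + 2)
  have : t.IsGE E n := t.isGE₂ _ (inv_rot_of_distTriang _ hT) n
    (t.isGE_of_ge (F⟦(-1 : ℤ)⟧) n (n + 2)) (show t.IsGE Y n from inferInstance)
  obtain ⟨E', ⟨e⟩⟩ : ι.essImage E := hι ▸ ⟨hE, this.1⟩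
  obtain ⟨γ : ι.obj L ⟶ E, rfl⟩ := Triangle.coyoneda_exact₂ _ hT g (t.zero (g ≫ q) n (n + 1))
  obtain ⟨β : ι.obj M ⟶ F⟦(-1 : ℤ)⟧, hβ⟩ := Triangle.coyoneda_exact₂ _
    (inv_rot_of_distTriang _ hT) (ι.map ε ≫ γ) ((Category.assoc _ _ _).trans h)
  have hεγ : ι.map ε ≫ γ = 0 := hβ.trans (by rw [t.zero β n (n + 2)]; exact zero_comp)
  have hγ : γ = 0 := by
    rw [← Preadditive.IsIso.comp_right_eq_zero _ e.inv, ← ι.preimage_eq_zero_iff,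
      ← cancel_epi ε, comp_zero]
    apply ι.map_injective
    simp [reassoc_of% hεγ]
  rw [hγ]
  exact zero_comp

lemma exists_simple_top_quotient (hι : ι.essImage = t.le n ⊓ t.ge n)
    (hlen : ∀ X : H, IsFiniteLength X) {X : C} [t.IsLE X n] (hX : ¬ t.IsLE X (n - 1)) :
    ∃ (L : H) (_ : Simple L) (f : X ⟶ ι.obj L),
      ∀ (Y : C) [t.IsGE Y n] (g : ι.obj L ⟶ Y), g ≠ 0 → f ≫ g ≠ 0 := by
  obtain ⟨A, Q, hA, hQ, a, q, δ, hT⟩ := t.exists_triangle X (n - 1) n (by omega)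
  have : t.IsLE A (n - 1) := ⟨hA⟩
  have : t.IsLE (A⟦(1 : ℤ)⟧) (n - 2) := t.isLE_shift A (n - 1) 1 (n - 2)
  have : t.IsLE Q n := t.isLE₂ _ (rot_of_distTriang _ hT) n (show t.IsLE X n from inferInstance)
    (t.isLE_of_le (A⟦(1 : ℤ)⟧) (n - 2) n)
  obtain ⟨M, ⟨e⟩⟩ : ι.essImage Q := hι ▸ ⟨this.1, hQ⟩
  have hM : ¬ IsZero M := fun hM ↦ hX (t.isLE₂ _ hT (n - 1)
    (show t.IsLE A (n - 1) from inferInstance)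
    (t.isLE_of_isZero ((ι.map_isZero hM).of_iso e.symm) _))
  obtain ⟨L, hL, ε, hε⟩ := (hlen M).exists_epi_simple hM
  refine ⟨L, hL, q ≫ e.inv ≫ ι.map ε, fun Y _ g hg hfg ↦ hg ?_⟩
  apply eq_zero_of_map_epi_comp_eq_zero hι ε
  rw [← Preadditive.IsIso.comp_left_eq_zero e.inv]
  obtain ⟨β : A⟦(1 : ℤ)⟧ ⟶ Y, hβ⟩ := Triangle.yoneda_exact₃ _ hT (e.inv ≫ ι.map ε ≫ g)
    (by simpa only [Category.assoc] using hfg : q ≫ e.inv ≫ ι.map ε ≫ g = 0)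
  exact hβ.trans (by rw [t.zero β (n - 2) n]; exact comp_zero)

end Heart

section Duality

variable {t} {Dl : C ⥤ Cᵒᵖ} [Dl.CommShift ℤ]

lemma isGE_unop_obj_of_isLE (hDl : ∀ X : C, t.le 0 X → t.ge 0 (Dl.obj X).unop) (X : C) (n : ℤ)
    [t.IsLE X n] : t.IsGE (Dl.obj X).unop (-n) := by
  have : t.IsGE (Dl.obj (X⟦n⟧)).unop 0 := ⟨hDl _ (t.isLE_shift X n n 0).1⟩
  have : t.IsGE ((Dl.obj X).unop⟦-n⟧) 0 :=
    t.isGE_of_iso (Dl.unopObjShiftIso X n (-n) (by omega)) 0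
  exact t.isGE_of_shift _ (-n) (-n) 0

lemma exists_ne_zero_to_shift_unop_obj [Dl.Faithful] [Dl.PreservesZeroMorphisms]
    (hDl : ∀ X : C, t.le 0 X → t.ge 0 (Dl.obj X).unop)
    {H : Type*} [Category H] [Abelian H] {ι : H ⥤ C} [ι.Full] [ι.Faithful]
    (hι : ι.essImage = t.heart) (hlen : ∀ X : H, IsFiniteLength X)
    (hsimp : ∀ L : H, Simple L → Nonempty ((Dl.obj (ι.obj L)).unop ≅ ι.obj L))
    {X : C} {b : ℤ} [t.IsLE X b] (hX : ¬ t.IsLE X (b - 1)) :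
    ∃ h : X ⟶ (Dl.obj X).unop⟦-(b + b)⟧, h ≠ 0 := by
  have hι' := t.essImage_comp_shiftFunctor ι hι b
  obtain ⟨L, hL, f, hf⟩ := exists_simple_top_quotient hι' hlen hX
  obtain ⟨eL⟩ := hsimp L hL
  have := isGE_obj_of_essImage_eq hι' L
  have hf₀ : f ≠ 0 := fun h ↦ hf _ (𝟙 _) (fun h₁ ↦ id_nonzero L
    ((ι ⋙ shiftFunctor C (-b)).map_eq_zero_iff.1 (by simpa using h₁))) (by simp [h])
  let e : (ι.obj L)⟦-b⟧ ≅ (Dl.obj ((ι.obj L)⟦-b⟧)).unop⟦-(b + b)⟧ :=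
    (shiftFunctorAdd' C b (-(b + b)) (-b) (by omega)).app _ ≪≫ (shiftFunctor C _).mapIso
      ((shiftFunctor C b).mapIso eL.symm ≪≫ (Dl.unopObjShiftIso _ (-b) b (by omega)).symm)
  have := isGE_unop_obj_of_isLE hDl X b
  have : t.IsGE ((Dl.obj X).unop⟦-(b + b)⟧) b := t.isGE_shift _ (-b) _ _
  refine ⟨f ≫ e.hom ≫ ((Dl.map f).unop)⟦-(b + b)⟧', hf _ _ ?_⟩
  simpa [Preadditive.IsIso.comp_left_eq_zero, Functor.map_eq_zero_iff,
    Functor.unop_map_eq_zero_iff] using hf₀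

end Duality

section Embedding

variable {D : Type*} [Category D] [HasZeroObject D] [Preadditive D] [HasShift D ℤ]
  [∀ n : ℤ, (shiftFunctor D n).Additive] [Pretriangulated D]
  {tC : TStructure C} {tD : TStructure D} {DC : C ⥤ Cᵒᵖ} {DD : D ⥤ Dᵒᵖ}
  [DD.Faithful] [DD.PreservesZeroMorphisms] {φ : C ⥤ D} [φ.Full]
  {HD : Type*} [Category HD] [Abelian HD] {ιD : HD ⥤ D} [ιD.Full] [ιD.Faithful]

lemma isLE_zero_map_obj [DD.CommShift ℤ] [φ.CommShift ℤ]
    (hDC : ∀ X : C, tC.le 0 X → tC.ge 0 (DC.obj X).unop)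
    (hDD : ∀ X : D, tD.le 0 X → tD.ge 0 (DD.obj X).unop) (hφD : DC ⋙ φ.op ≅ φ ⋙ DD)
    (hfinD : ∀ X : D, ∃ a b : ℤ, tD.ge a X ∧ tD.le b X) (hιD : ιD.essImage = tD.heart)
    (hlenD : ∀ X : HD, IsFiniteLength X)
    (hsimp : ∀ L : HD, Simple L → Nonempty ((DD.obj (ιD.obj L)).unop ≅ ιD.obj L))
    (S : C) [tC.IsLE S 0] : tD.IsLE (φ.obj S) 0 := by
  by_contra hS
  obtain ⟨b, hb, _, hb'⟩ := tD.exists_isLE_not_isLE_pred (hfinD _) hS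
  obtain ⟨h, hh⟩ := exists_ne_zero_to_shift_unop_obj hDD hιD hlenD hsimp hb'
  let e : (DD.obj (φ.obj S)).unop⟦-(b + b)⟧ ≅ φ.obj ((DC.obj S).unop⟦-(b + b)⟧) :=
    (shiftFunctor D _).mapIso (hφD.app S).unop ≪≫ ((φ.commShiftIso _).app _).symm
  have : tC.IsGE (DC.obj S).unop 0 := ⟨hDC S (tC.le_of_isLE S 0)⟩
  have : tC.IsGE ((DC.obj S).unop⟦-(b + b)⟧) (b + b) := tC.isGE_shift _ 0 _ _
  apply hh
  rw [← Preadditive.IsIso.comp_right_eq_zero _ e.hom, ← φ.map_preimage (h ≫ e.hom),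
    tC.zero (φ.preimage _) 0 (b + b), φ.map_zero]

lemma isGE_zero_map_obj [DD.CommShift ℤ] [φ.CommShift ℤ]
    (hDC : ∀ X : C, tC.le 0 X → tC.ge 0 (DC.obj X).unop)
    (hDC' : ∀ X : C, tC.ge 0 X → tC.le 0 (DC.obj X).unop) (eDC : DC ⋙ DC.leftOp ≅ 𝟭 C)
    (hDD : ∀ X : D, tD.le 0 X → tD.ge 0 (DD.obj X).unop) (hφD : DC ⋙ φ.op ≅ φ ⋙ DD)
    (hfinD : ∀ X : D, ∃ a b : ℤ, tD.ge a X ∧ tD.le b X) (hιD : ιD.essImage = tD.heart)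
    (hlenD : ∀ X : HD, IsFiniteLength X)
    (hsimp : ∀ L : HD, Simple L → Nonempty ((DD.obj (ιD.obj L)).unop ≅ ιD.obj L))
    (S : C) [tC.IsGE S 0] : tD.IsGE (φ.obj S) 0 := by
  have : tC.IsLE (DC.obj S).unop 0 := ⟨hDC' S (tC.ge_of_isGE S 0)⟩
  have := isLE_zero_map_obj hDC hDD hφD hfinD hιD hlenD hsimp (DC.obj S).unop
  have : tD.IsGE (DD.obj (φ.obj (DC.obj S).unop)).unop 0 := ⟨hDD _ (tD.le_of_isLE _ 0)⟩
  let e : (DD.obj (φ.obj (DC.obj S).unop)).unop ≅ φ.obj S :=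
    (hφD.app _).unop ≪≫ φ.mapIso (eDC.app S)
  exact tD.isGE_of_iso e 0

lemma exists_simple_iso_unop_obj (hDC : ∀ X : C, tC.le 0 X → tC.ge 0 (DC.obj X).unop)
    (hDC' : ∀ X : C, tC.ge 0 X → tC.le 0 (DC.obj X).unop) [DC.Faithful]
    [DC.PreservesZeroMorphisms] (eDC : DC ⋙ DC.leftOp ≅ 𝟭 C) {HC : Type*} [Category HC]
    [Abelian HC] {ιC : HC ⥤ C} [ιC.Full] [ιC.Faithful] (hιC : ιC.essImage = tC.heart)
    (S : HC) [Simple S] :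
    ∃ S' : HC, Simple S' ∧ Nonempty (ιC.obj S' ≅ (DC.obj (ιC.obj S)).unop) := by
  have hdual (X : HC) : ιC.essImage (DC.obj (ιC.obj X)).unop := by
    have hX : tC.heart (ιC.obj X) := hιC ▸ ιC.obj_mem_essImage X
    exact hιC ▸ ⟨hDC' _ hX.2, hDC _ hX.1⟩
  obtain ⟨S', ⟨eS'⟩⟩ := hdual S
  exact ⟨S', simple_of_unop_obj_iso ιC DC hdual ((DC.mapIso eS').unop.symm ≪≫ eDC.app _), ⟨eS'⟩⟩

lemma exists_simple_iso_map_obj (hDC : ∀ X : C, tC.le 0 X → tC.ge 0 (DC.obj X).unop)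
    (hDC' : ∀ X : C, tC.ge 0 X → tC.le 0 (DC.obj X).unop) [DC.Faithful]
    [DC.PreservesZeroMorphisms] (eDC : DC ⋙ DC.leftOp ≅ 𝟭 C)
    (hDD : ∀ X : D, tD.le 0 X → tD.ge 0 (DD.obj X).unop) [φ.Faithful] (hφD : DC ⋙ φ.op ≅ φ ⋙ DD)
    (hφ : ∀ X : C, tC.heart X → tD.heart (φ.obj X)) {HC : Type*} [Category HC] [Abelian HC]
    {ιC : HC ⥤ C} [ιC.Full] [ιC.Faithful] (hιC : ιC.essImage = tC.heart)
    (hιD : ιD.essImage = tD.heart) (hlenD : ∀ X : HD, IsFiniteLength X)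
    (hsimp : ∀ L : HD, Simple L → Nonempty ((DD.obj (ιD.obj L)).unop ≅ ιD.obj L))
    (S : HC) [Simple S] : ∃ M : HD, Simple M ∧ Nonempty (φ.obj (ιC.obj S) ≅ ιD.obj M) := by
  obtain ⟨S', hS', ⟨eS'⟩⟩ := exists_simple_iso_unop_obj hDC hDC' eDC hιC S
  obtain ⟨M, ⟨eM⟩⟩ : ιD.essImage (φ.obj (ιC.obj S)) :=
    hιD ▸ hφ _ (hιC ▸ ιC.obj_mem_essImage S)
  have hM : ¬ IsZero M := fun hM ↦ Simple.not_isZero S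
    ((ιC ⋙ φ).isZero_of_isZero_obj ((ιD.map_isZero hM).of_iso eM.symm))
  obtain ⟨L, hL, ε, hε⟩ := (hlenD M).exists_epi_simple hM
  obtain ⟨eL⟩ := hsimp L hL
  let g : ιD.obj L ⟶ (DD.obj (ιD.obj M)).unop := eL.inv ≫ (DD.map (ιD.map ε)).unop
  have hg : g ≠ 0 := by
    simpa [g, Preadditive.IsIso.comp_left_eq_zero, Functor.unop_map_eq_zero_iff,
      Functor.map_eq_zero_iff] using fun h ↦ Simple.not_isZero L (IsZero.of_epi_eq_zero ε h)
  have : tD.IsGE (DD.obj (ιD.obj M)).unop 0 :=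
    ⟨hDD _ (show tD.heart (ιD.obj M) from hιD ▸ ιD.obj_mem_essImage M).1⟩
  have hεg : ιD.map ε ≫ g ≠ 0 := fun h ↦ hg (eq_zero_of_map_epi_comp_eq_zero hιD ε h)
  let e : (DD.obj (ιD.obj M)).unop ≅ φ.obj (ιC.obj S') :=
    (DD.mapIso eM).unop.symm ≪≫ (hφD.app _).unop ≪≫ φ.mapIso eS'.symm
  let c := eM.inv ≫ (ιD.map ε ≫ g) ≫ e.hom
  have : IsIso (ιC.preimage (φ.preimage c)) := isIso_of_hom_simple (by
    rw [Ne, ιC.preimage_eq_zero_iff, φ.preimage_eq_zero_iff,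
      Preadditive.IsIso.comp_left_eq_zero, Preadditive.IsIso.comp_right_eq_zero]
    exact hεg)
  have : IsIso c := by
    simpa using (inferInstance : IsIso (φ.map (ιC.map (ιC.preimage (φ.preimage c)))))
  have : IsIso ((ιD.map ε ≫ g) ≫ e.hom) := IsIso.of_isIso_comp_left eM.inv _
  have : IsIso (ιD.map ε ≫ g) := IsIso.of_isIso_comp_right _ e.hom
  have : IsIso ε := isIso_of_isIso_map_comp ιD ε g
  exact ⟨L, hL, ⟨eM.symm ≪≫ ιD.mapIso (asIso ε)⟩⟩

end Embedding

end CategoryTheory.Triangulated.TStructure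

/-- Let `C`, `D` be triangulated categories with homologically finite t-structures `tC`, `tD`
(every object is bounded for the t-structure), with hearts realized by fully faithful functors
`ιC : HC ⥤ C`, `ιD : HD ⥤ D` from abelian categories whose essential images are the hearts,
and with t-exact dualities `DC`, `DD` (contravariant triangulated self-equivalences squaring
to the identity, exchanging the `≤ 0` and `≥ 0` parts). Let `φ : C ⥤ D` be an exact fully
faithful functor with `φ ∘ DC ≅ DD ∘ φ`. If every object of the hearts has finite length and
every simple object `L` of the heart of `D` satisfies `DD L ≅ L`, then `φ` is t-exact and
sends simple objects of the heart of `C` to simple objects of the heart of `D`. -/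
theorem statement0
    {C : Type*} [Category C] [HasZeroObject C] [Preadditive C] [HasShift C ℤ]
    [∀ n : ℤ, (CategoryTheory.shiftFunctor C n).Additive] [Pretriangulated C]
    {D : Type*} [Category D] [HasZeroObject D] [Preadditive D] [HasShift D ℤ]
    [∀ n : ℤ, (CategoryTheory.shiftFunctor D n).Additive] [Pretriangulated D]
    (tC : TStructure C) (tD : TStructure D)
    -- the t-structures are homologically finite: every object is bounded
    (hfinC : ∀ X : C, ∃ a b : ℤ, tC.ge a X ∧ tC.le b X)
    (hfinD : ∀ X : D, ∃ a b : ℤ, tD.ge a X ∧ tD.le b X)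
    -- abelian realizations of the hearts
    {HC : Type*} [Category HC] [Abelian HC] (ιC : HC ⥤ C) [ιC.Full] [ιC.Faithful]
    (hHC : ∀ X : HC, tC.le 0 (ιC.obj X) ∧ tC.ge 0 (ιC.obj X))
    (hHC' : ∀ Y : C, tC.le 0 Y → tC.ge 0 Y → ∃ X : HC, Nonempty (ιC.obj X ≅ Y))
    {HD : Type*} [Category HD] [Abelian HD] (ιD : HD ⥤ D) [ιD.Full] [ιD.Faithful]
    (hHD : ∀ X : HD, tD.le 0 (ιD.obj X) ∧ tD.ge 0 (ιD.obj X))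
    (hHD' : ∀ Y : D, tD.le 0 Y → tD.ge 0 Y → ∃ X : HD, Nonempty (ιD.obj X ≅ Y))
    -- the dualities: contravariant triangulated self-equivalences with `D² ≅ Id`
    (DC : C ⥤ Cᵒᵖ) [DC.IsEquivalence] [DC.CommShift ℤ] [DC.IsTriangulated]
    (eDC : DC ⋙ DC.leftOp ≅ 𝟭 C)
    (DD : D ⥤ Dᵒᵖ) [DD.IsEquivalence] [DD.CommShift ℤ] [DD.IsTriangulated]
    (eDD : DD ⋙ DD.leftOp ≅ 𝟭 D)
    -- t-exactness of the dualities: they exchange the `≤ 0` and `≥ 0` parts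
    (hDCle : ∀ X : C, tC.le 0 X → tC.ge 0 ((DC.obj X).unop))
    (hDCge : ∀ X : C, tC.ge 0 X → tC.le 0 ((DC.obj X).unop))
    (hDDle : ∀ X : D, tD.le 0 X → tD.ge 0 ((DD.obj X).unop))
    (hDDge : ∀ X : D, tD.ge 0 X → tD.le 0 ((DD.obj X).unop))
    -- φ: an exact (triangulated) fully faithful functor commuting with the dualities
    (φ : C ⥤ D) [φ.CommShift ℤ] [φ.IsTriangulated] [φ.Full] [φ.Faithful]
    (hφD : DC ⋙ φ.op ≅ φ ⋙ DD)
    -- all objects of the hearts have finite length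
    (hlenC : ∀ X : HC, CategoryTheory.IsFiniteLength X)
    (hlenD : ∀ X : HD, CategoryTheory.IsFiniteLength X)
    -- every simple object of the heart of `D` is fixed by the duality
    (hsimp : ∀ L : HD, Simple L → Nonempty ((DD.obj (ιD.obj L)).unop ≅ ιD.obj L)) :
    ((∀ X : C, tC.le 0 X → tD.le 0 (φ.obj X)) ∧
      (∀ X : C, tC.ge 0 X → tD.ge 0 (φ.obj X))) ∧
    (∀ L : HC, Simple L → ∃ M : HD, Simple M ∧ Nonempty (φ.obj (ιC.obj L) ≅ ιD.obj M)) := by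
  have hιC : ιC.essImage = tC.heart := ιC.essImage_eq_inf hHC hHC'
  have hιD : ιD.essImage = tD.heart := ιD.essImage_eq_inf hHD hHD'
  have hle (X : C) (hX : tC.le 0 X) : tD.le 0 (φ.obj X) :=
    have : tC.IsLE X 0 := ⟨hX⟩
    (TStructure.isLE_zero_map_obj hDCle hDDle hφD hfinD hιD hlenD hsimp X).1
  have hge (X : C) (hX : tC.ge 0 X) : tD.ge 0 (φ.obj X) :=
    have : tC.IsGE X 0 := ⟨hX⟩
    (TStructure.isGE_zero_map_obj hDCle hDCge eDC hDDle hφD hfinD hιD hlenD hsimp X).1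
  exact ⟨⟨hle, hge⟩, fun S _ ↦ TStructure.exists_simple_iso_map_obj hDCle hDCge eDC hDDle hφD
    (fun X hX ↦ ⟨hle X hX.1, hge X hX.2⟩) hιC hιD hlenD hsimp S⟩
end

section
/- Let C and D be triangulated categories equipped with bounded t-structures with hearts C♥ and D♥, and let φ : C → D be an exact (triangulated) fully faithful functor that is t-exact. Assume that every object of D♥ has finite length and that every simple object of D♥ is isomorphic to φ(X) for some object X of C♥. Then φ is an equivalence of triangulated categories, and it restricts to an equivalence of abelian categories C♥ ≃ D♥. -/
open CategoryTheory Limits Triangulated CategoryTheory.Pretriangulated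

/-!
The essential image of `φ` is a triangulated subcategory of `D`. A short exact sequence in the
heart of `D` is a distinguished triangle, so by induction on the length every object of the heart
lies in the essential image; splitting off truncations, so does every bounded object, and `φ` is
an equivalence. A fully faithful t-exact functor reflects `≤ n` and `≥ n` (by the orthogonality
description of both), so `φ` and its inverse preserve the hearts, and two fully faithful functors
with the same essential image differ by an equivalence.
-/

namespace CategoryTheory.Functor

lemma eq_zero_of_comp_map_eq_zero {H C : Type*} [Category H] [HasZeroMorphisms H] [Category C]
    [HasZeroMorphisms C] (ι : H ⥤ C) [ι.Full] [ι.Faithful] {X Y : H} (f : X ⟶ Y) [Mono f]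
    {N : C} (hN : ι.essImage N) (ψ : N ⟶ ι.obj X) (hψ : ψ ≫ ι.map f = 0) : ψ = 0 := by
  obtain ⟨N₀, ⟨e⟩⟩ := hN
  have : ι.preimage (e.hom ≫ ψ) = 0 := by
    rw [← cancel_mono f, zero_comp]
    apply ι.map_injective
    rw [Functor.map_comp, Functor.map_preimage, Functor.map_zero, Category.assoc, hψ, comp_zero]
  rw [← cancel_epi e.hom, comp_zero]
  simpa using congr(ι.map $this)

lemma exists_isEquivalence_of_essImage_eq {H H' D : Type*} [Category H] [Category H']
    [Category D] (G : H ⥤ D) [G.Full] [G.Faithful]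
    (ι : H' ⥤ D) [ι.Full] [ι.Faithful] (h : G.essImage = ι.essImage) :
    ∃ ψ : H ⥤ H', ψ.IsEquivalence ∧ Nonempty (G ≅ ψ ⋙ ι) := by
  have hG : ∀ X, ι.essImage (G.obj X) := fun X ↦ h ▸ G.obj_mem_essImage X
  have : ι.toEssImage.IsEquivalence := {}
  have : (ι.essImage.lift G hG).EssSurj := ⟨fun ⟨Y, hY⟩ ↦ by
    obtain ⟨X, ⟨e⟩⟩ := h ▸ hY
    exact ⟨X, ⟨ι.essImage.isoMk e⟩⟩⟩
  have : (ι.essImage.lift G hG).IsEquivalence := {}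
  let e := ι.toEssImage.asEquivalence
  refine ⟨ι.essImage.lift G hG ⋙ e.inverse, inferInstance, ⟨?_⟩⟩
  exact isoWhiskerLeft (ι.essImage.lift G hG)
    (isoWhiskerRight e.counitIso.symm ι.essImage.ι ≪≫ isoWhiskerLeft e.inverse ι.toEssImageCompι)

end CategoryTheory.Functor

namespace CategoryTheory.Triangulated.TStructure

variable {C : Type*} [Category C] [Preadditive C] [HasZeroObject C] [HasShift C ℤ]
  [∀ n : ℤ, (shiftFunctor C n).Additive] [Pretriangulated C] (t : TStructure C)

lemma essImage_eq_heart {H : Type*} [Category H] (ι : H ⥤ C)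
    (h₁ : ∀ X, t.le 0 (ι.obj X) ∧ t.ge 0 (ι.obj X))
    (h₂ : ∀ Y, t.le 0 Y → t.ge 0 Y → ∃ X, Nonempty (ι.obj X ≅ Y)) :
    ι.essImage = t.heart := by
  ext Y
  constructor
  · rintro ⟨X, ⟨e⟩⟩
    exact t.heart.prop_of_iso e (h₁ X)
  · rintro ⟨hle, hge⟩
    exact h₂ Y hle hge

lemma hom_ext_of_distTriang {X₁ X₂ X₃ : C} {u : X₁ ⟶ X₂} {v : X₂ ⟶ X₃}
    {w : X₃ ⟶ X₁⟦(1 : ℤ)⟧}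
    (hT : Triangle.mk u v w ∈ distTriang C) (n : ℤ) [t.IsLE X₁ n] {Y : C} [t.IsGE Y n]
    {f₁ f₂ : X₃ ⟶ Y} (h : v ≫ f₁ = v ≫ f₂) : f₁ = f₂ := by
  have := t.isLE_shift X₁ n 1 (n - 1)
  rw [← sub_eq_zero]
  obtain ⟨g, hg⟩ : ∃ g : X₁⟦(1 : ℤ)⟧ ⟶ Y, f₁ - f₂ = w ≫ g :=
    Triangle.yoneda_exact₃ _ hT (f₁ - f₂) (by
      change v ≫ (f₁ - f₂) = 0
      rw [Preadditive.comp_sub, h, sub_self])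
  rw [hg, t.zero g (n - 1) n, comp_zero]

lemma eq_zero_of_isLE_of_comp_eq_zero {A B : C} (u : A ⟶ B) [t.IsGE A 0] [t.IsGE B 0]
    (hu : ∀ N, t.heart N → ∀ ψ : N ⟶ A, ψ ≫ u = 0 → ψ = 0)
    {Y : C} [t.IsLE Y 0] (ψ : Y ⟶ A) (hψ : ψ ≫ u = 0) : ψ = 0 := by
  -- `ψ` factors through `τ≥0 Y`, which lies in the heart.
  have : t.IsLE ((t.truncGE 0).obj Y) 0 := by
    have := t.isLE_truncLT_obj Y 0 (-1)
    have := t.isLE_shift ((t.truncLT 0).obj Y) (-1) 1 (-2)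
    have := t.isLE_of_le (((t.truncLT 0).obj Y)⟦(1 : ℤ)⟧) (-2) 0
    exact t.isLE₂ _ (rot_of_distTriang _ (t.triangleLTGE_distinguished 0 Y)) 0
      ‹t.IsLE Y 0› ‹_›
  have hψ' : t.descTruncGE ψ 0 = 0 :=
    hu _ ((t.mem_heart_iff _).2 ⟨inferInstance, inferInstance⟩) _
      (t.from_truncGE_obj_ext (by simp [hψ]))
  rw [← t.π_descTruncGE ψ 0, hψ', comp_zero]

lemma heart_obj₃_of_distTriang (T : Triangle C) (hT : T ∈ distTriang C)
    (h₁ : t.heart T.obj₁) (h₂ : t.heart T.obj₂)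
    (hmono : ∀ N, t.heart N → ∀ ψ : N ⟶ T.obj₁, ψ ≫ T.mor₁ = 0 → ψ = 0) :
    t.heart T.obj₃ := by
  rw [t.mem_heart_iff] at h₁ h₂ ⊢
  obtain ⟨_, _⟩ := h₁
  obtain ⟨_, _⟩ := h₂
  constructor
  · have := t.isLE_shift T.obj₁ 0 1 (-1)
    have := t.isLE_of_le (T.obj₁⟦(1 : ℤ)⟧) (-1) 0
    exact t.isLE₂ _ (rot_of_distTriang _ hT) 0 ‹_› ‹_›
  · rw [t.isGE_iff_orthogonal (-1) 0 (by lia)]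
    intro Y f _
    -- `f ≫ T.mor₃` is the shift of a map `Y⟦-1⟧ ⟶ T.obj₁` killed by `T.mor₁`.
    have hf : f ≫ T.mor₃ = 0 := by
      let e := (shiftFunctorCompIsoId C (-1 : ℤ) 1 (by lia)).app Y
      have := t.isLE_shift Y (-1) (-1) 0
      obtain ⟨g, hg⟩ := (shiftFunctor C (1 : ℤ)).map_surjective (e.hom ≫ f ≫ T.mor₃)
      have hg₀ : g = 0 := t.eq_zero_of_isLE_of_comp_eq_zero T.mor₁ hmono g
        ((shiftFunctor C (1 : ℤ)).map_injective (by
          simp [hg, comp_distTriang_mor_zero₃₁ _ hT]))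
      rw [← cancel_epi e.hom, ← hg, hg₀, Functor.map_zero, comp_zero]
    obtain ⟨g, rfl⟩ := Triangle.coyoneda_exact₃ _ hT f hf
    rw [t.zero g (-1) 0, zero_comp]

lemma exists_distTriang_of_shortExact {H : Type*} [Category H] [Abelian H] (ι : H ⥤ C)
    [ι.Full] [ι.Faithful] (hι : ι.essImage = t.heart) {S : ShortComplex H}
    (hS : S.ShortExact) :
    ∃ δ, Triangle.mk (ι.map S.f) (ι.map S.g) δ ∈ distTriang C := by
  have hheart (X : H) : t.heart (ι.obj X) := hι ▸ ι.obj_mem_essImage X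
  have := hS.mono_f
  have := hS.epi_g
  obtain ⟨Z, v, w, hT⟩ := distinguished_cocone_triangle (ι.map S.f)
  have hZ : t.heart Z := t.heart_obj₃_of_distTriang _ hT (hheart _) (hheart _)
    fun N hN ↦ ι.eq_zero_of_comp_map_eq_zero S.f (hι ▸ hN)
  -- `Z ≅ ι.obj Q` is a cokernel of `ι.map S.f`; `d` and `c` identify it with `ι.obj S.X₃`.
  obtain ⟨Q, ⟨e⟩⟩ : ι.essImage Z := hι ▸ hZ
  have hfv : ι.map S.f ≫ v = 0 := comp_distTriang_mor_zero₁₂ _ hT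
  obtain ⟨d, hd⟩ : ∃ d : S.X₃ ⟶ Q, S.g ≫ d = ι.preimage (v ≫ e.inv) :=
    ⟨_, (CokernelCofork.IsColimit.desc' hS.gIsCokernel (ι.preimage (v ≫ e.inv))
      (ι.map_injective (by simp [reassoc_of% hfv]))).2⟩
  obtain ⟨c, hc⟩ : ∃ c : Z ⟶ ι.obj S.X₃, ι.map S.g = v ≫ c :=
    Triangle.yoneda_exact₂ _ hT (ι.map S.g) (by
      change ι.map S.f ≫ ι.map S.g = 0
      rw [← Functor.map_comp, S.zero, Functor.map_zero])
  replace hd : ι.map S.g ≫ ι.map d ≫ e.hom = v := by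
    rw [← Functor.map_comp_assoc, hd]
    simp
  have hdc : d ≫ ι.preimage (e.hom ≫ c) = 𝟙 _ := by
    rw [← cancel_epi S.g]
    apply ι.map_injective
    simp only [Functor.map_comp, Functor.map_preimage, Category.comp_id]
    rw [reassoc_of% hd, ← hc]
  obtain ⟨_, _⟩ := (t.mem_heart_iff _).1 (hheart S.X₁)
  obtain ⟨_, _⟩ := (t.mem_heart_iff _).1 hZ
  let dZ : ι.obj S.X₃ ≅ Z :=
    { hom := ι.map d ≫ e.hom
      inv := c
      hom_inv_id := by simpa using congr(ι.map $hdc)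
      inv_hom_id := t.hom_ext_of_distTriang hT 0 (by
        rw [← Category.assoc, ← hc, hd, Category.comp_id]) }
  exact ⟨dZ.hom ≫ w, isomorphic_distinguished _ hT _
    (Triangle.isoMk _ _ (Iso.refl _) (Iso.refl _) dZ
      ((Category.comp_id _).trans (Category.id_comp _).symm) (hd.trans (Category.id_comp v).symm)
      ((congrArg _ ((shiftFunctor C (1 : ℤ)).map_id _)).trans (Category.comp_id _)))⟩

lemma prop_obj_of_isFiniteLength {H : Type*} [Category H] [Abelian H] (ι : H ⥤ C)
    [ι.Full] [ι.Faithful] (hι : ι.essImage = t.heart) (P : ObjectProperty C)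
    [P.IsTriangulated] [P.IsClosedUnderIsomorphisms] (hP : ∀ M : H, Simple M → P (ι.obj M))
    {M : H} (hM : IsFiniteLength M) : P (ι.obj M) := by
  induction hM with
  | of_isZero X hX => exact P.prop_of_isZero (ι.map_isZero hX)
  | of_shortExact S hS _ h₃ ih =>
    obtain ⟨δ, hT⟩ := t.exists_distTriang_of_shortExact ι hι hS
    exact P.ext_of_isTriangulatedClosed₂ _ hT ih (hP _ h₃)

lemma bounded_le_of_heart_le (P : ObjectProperty C) [P.IsTriangulated]
    [P.IsClosedUnderIsomorphisms] (hP : t.heart ≤ P) : t.bounded ≤ P := by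
  have hconc (X : C) (a : ℤ) [t.IsGE X a] [t.IsLE X a] : P X := by
    have := t.isLE_shift X a a 0
    have := t.isGE_shift X a a 0
    exact (P.prop_shift_iff_of_isStableUnderShift X a).1
      (hP _ ((t.mem_heart_iff _).2 ⟨inferInstance, inferInstance⟩))
  suffices H : ∀ (k : ℕ) (X : C) (a : ℤ), t.IsGE X a → t.IsLE X (a + k) → P X by
    rintro X ⟨⟨a, ha⟩, ⟨b, hb⟩⟩
    exact H _ X a ha (t.isLE_of_le X b (a + (b - a).toNat))
  intro k
  induction k with
  | zero =>
    intro X a _ _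
    have : t.IsLE X a := by simpa using ‹t.IsLE X (a + (0 : ℕ))›
    exact hconc X a
  | succ k ih =>
    intro X a _ _
    obtain ⟨A, B, hA, hB, f, g, h, hT⟩ := t.exists_triangle X a (a + 1) rfl
    have : t.IsLE A a := ⟨hA⟩
    have : t.IsGE B (a + 1) := ⟨hB⟩
    have : t.IsGE A a := by
      have := t.isGE_shift B (a + 1) (-1) (a + 2)
      exact t.isGE₂ _ (inv_rot_of_distTriang _ hT) a
        (t.isGE_of_ge (B⟦(-1 : ℤ)⟧) a (a + 2)) ‹_›
    have : t.IsLE B (a + 1 + k) := by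
      have := t.isLE_shift A a 1 (a - 1)
      exact t.isLE₂ _ (rot_of_distTriang _ hT) _ (t.isLE_of_le X (a + (k + 1 : ℕ)) _)
        (t.isLE_of_le (A⟦(1 : ℤ)⟧) (a - 1) _)
    exact P.ext_of_isTriangulatedClosed₂ _ hT (hconc A a) (ih B (a + 1) ‹_› ‹_›)

section Functor

variable {D : Type*} [Category D] [Preadditive D] [HasZeroObject D] [HasShift D ℤ]
  [∀ n : ℤ, (shiftFunctor D n).Additive] [Pretriangulated D] (tD : TStructure D)
  (F : C ⥤ D) [F.CommShift ℤ]

lemma isLE_map_obj (hF : ∀ X, t.le 0 X → tD.le 0 (F.obj X)) (X : C) (n : ℤ) [t.IsLE X n] :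
    tD.IsLE (F.obj X) n := by
  have := t.isLE_shift X n n 0
  have : tD.IsLE (F.obj (X⟦n⟧)) 0 := ⟨hF _ (t.le_of_isLE _ _)⟩
  have := tD.isLE_of_iso (X := F.obj (X⟦n⟧)) (Y := (F.obj X)⟦n⟧)
    ((F.commShiftIso n).app X) 0
  exact tD.isLE_of_shift (F.obj X) n n 0

lemma isGE_map_obj (hF : ∀ X, t.ge 0 X → tD.ge 0 (F.obj X)) (X : C) (n : ℤ) [t.IsGE X n] :
    tD.IsGE (F.obj X) n := by
  have := t.isGE_shift X n n 0
  have : tD.IsGE (F.obj (X⟦n⟧)) 0 := ⟨hF _ (t.ge_of_isGE _ _)⟩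
  have := tD.isGE_of_iso (X := F.obj (X⟦n⟧)) (Y := (F.obj X)⟦n⟧)
    ((F.commShiftIso n).app X) 0
  exact tD.isGE_of_shift (F.obj X) n n 0

variable [F.PreservesZeroMorphisms] [F.Faithful]

lemma isLE_of_isLE_map_obj (hF : ∀ X, t.ge 0 X → tD.ge 0 (F.obj X)) (X : C) (n : ℤ)
    [tD.IsLE (F.obj X) n] : t.IsLE X n := by
  rw [t.isLE_iff_orthogonal n (n + 1) rfl]
  intro Y f _
  have := t.isGE_map_obj tD F hF Y (n + 1)
  exact F.map_eq_zero_iff.1 (tD.zero _ n (n + 1))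

lemma isGE_of_isGE_map_obj (hF : ∀ X, t.le 0 X → tD.le 0 (F.obj X)) (X : C) (n : ℤ)
    [tD.IsGE (F.obj X) n] : t.IsGE X n := by
  rw [t.isGE_iff_orthogonal (n - 1) n (by lia)]
  intro Y f _
  have := t.isLE_map_obj tD F hF Y (n - 1)
  exact F.map_eq_zero_iff.1 (tD.zero _ (n - 1) n)

lemma heart_map_obj_iff (hle : ∀ X, t.le 0 X → tD.le 0 (F.obj X))
    (hge : ∀ X, t.ge 0 X → tD.ge 0 (F.obj X)) (X : C) : tD.heart (F.obj X) ↔ t.heart X := by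
  simp only [mem_heart_iff]
  constructor
  · rintro ⟨_, _⟩
    exact ⟨t.isLE_of_isLE_map_obj tD F hge X 0, t.isGE_of_isGE_map_obj tD F hle X 0⟩
  · rintro ⟨_, _⟩
    exact ⟨t.isLE_map_obj tD F hle X 0, t.isGE_map_obj tD F hge X 0⟩

lemma essImage_comp_eq_heart [F.EssSurj] (hle : ∀ X, t.le 0 X → tD.le 0 (F.obj X))
    (hge : ∀ X, t.ge 0 X → tD.ge 0 (F.obj X)) {H : Type*} [Category H] (ι : H ⥤ C)
    (hι : ι.essImage = t.heart) : (ι ⋙ F).essImage = tD.heart := by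
  ext Y
  constructor
  · rintro ⟨X, ⟨e⟩⟩
    exact tD.heart.prop_of_iso e
      ((t.heart_map_obj_iff tD F hle hge _).2 (hι ▸ ι.obj_mem_essImage X))
  · intro hY
    obtain ⟨X, ⟨e⟩⟩ := Functor.EssSurj.mem_essImage F Y
    obtain ⟨X', ⟨e'⟩⟩ : ι.essImage X :=
      hι ▸ (t.heart_map_obj_iff tD F hle hge X).1 (tD.heart.prop_of_iso e.symm hY)
    exact ⟨X', ⟨F.mapIso e' ≪≫ e⟩⟩

end Functor

end CategoryTheory.Triangulated.TStructure

/-- Let `C`, `D` be triangulated categories with bounded t-structures `tC`, `tD` whose hearts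
are realized by fully faithful functors `ιC : HC ⥤ C`, `ιD : HD ⥤ D` from abelian categories
with essential images the hearts. Let `φ : C ⥤ D` be an exact (triangulated) fully faithful
t-exact functor. If every object of the heart of `D` has finite length and every simple object
of the heart of `D` is isomorphic to the image under `φ` of an object of the heart of `C`,
then `φ` is an equivalence of triangulated categories and restricts to an equivalence of the
hearts. -/
theorem statement4
    {C : Type*} [Category C] [HasZeroObject C] [Preadditive C] [HasShift C ℤ]
    [∀ n : ℤ, (CategoryTheory.shiftFunctor C n).Additive] [Pretriangulated C]
    {D : Type*} [Category D] [HasZeroObject D] [Preadditive D] [HasShift D ℤ]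
    [∀ n : ℤ, (CategoryTheory.shiftFunctor D n).Additive] [Pretriangulated D]
    (tC : TStructure C) (tD : TStructure D)
    -- the t-structures are bounded
    (hbC : ∀ X : C, ∃ a b : ℤ, tC.ge a X ∧ tC.le b X)
    (hbD : ∀ X : D, ∃ a b : ℤ, tD.ge a X ∧ tD.le b X)
    -- abelian realizations of the hearts
    {HC : Type*} [Category HC] [Abelian HC] (ιC : HC ⥤ C) [ιC.Full] [ιC.Faithful]
    (hHC : ∀ X : HC, tC.le 0 (ιC.obj X) ∧ tC.ge 0 (ιC.obj X))
    (hHC' : ∀ Y : C, tC.le 0 Y → tC.ge 0 Y → ∃ X : HC, Nonempty (ιC.obj X ≅ Y))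
    {HD : Type*} [Category HD] [Abelian HD] (ιD : HD ⥤ D) [ιD.Full] [ιD.Faithful]
    (hHD : ∀ X : HD, tD.le 0 (ιD.obj X) ∧ tD.ge 0 (ιD.obj X))
    (hHD' : ∀ Y : D, tD.le 0 Y → tD.ge 0 Y → ∃ X : HD, Nonempty (ιD.obj X ≅ Y))
    -- φ: an exact (triangulated) fully faithful t-exact functor
    (φ : C ⥤ D) [φ.CommShift ℤ] [φ.IsTriangulated] [φ.Full] [φ.Faithful]
    (hφle : ∀ X : C, tC.le 0 X → tD.le 0 (φ.obj X))
    (hφge : ∀ X : C, tC.ge 0 X → tD.ge 0 (φ.obj X))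
    -- every object of the heart of `D` has finite length
    (hlenD : ∀ X : HD, CategoryTheory.IsFiniteLength X)
    -- every simple object of the heart of `D` comes from the heart of `C`
    (hsimp : ∀ M : HD, Simple M → ∃ X : HC, Nonempty (ιD.obj M ≅ φ.obj (ιC.obj X))) :
    φ.IsEquivalence ∧
      ∃ ψ : HC ⥤ HD, ψ.IsEquivalence ∧ Nonempty (ιC ⋙ φ ≅ ψ ⋙ ιD) := by
  have hιC := tC.essImage_eq_heart ιC hHC hHC'
  have hιD := tD.essImage_eq_heart ιD hHD hHD'
  have hheart : tD.heart ≤ φ.essImage := by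
    rw [← hιD]
    rintro _ ⟨M, ⟨e⟩⟩
    refine φ.essImage.prop_of_iso e
      (tD.prop_obj_of_isFiniteLength ιD hιD _ (fun M' hM' ↦ ?_) (hlenD M))
    obtain ⟨X, ⟨e'⟩⟩ := hsimp M' hM'
    exact ⟨_, ⟨e'.symm⟩⟩
  have : φ.EssSurj := ⟨fun Y ↦ by
    obtain ⟨a, b, ha, hb⟩ := hbD Y
    exact tD.bounded_le_of_heart_le _ hheart Y ⟨⟨a, ⟨ha⟩⟩, ⟨b, ⟨hb⟩⟩⟩⟩
  refine ⟨{}, Functor.exists_isEquivalence_of_essImage_eq (ιC ⋙ φ) ιD ?_⟩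
  rw [tC.essImage_comp_eq_heart tD φ hφle hφge ιC hιC, hιD]
end

section
/- Let R be a commutative local ring and let P and Q be finitely generated projective R-modules such that the endomorphism rings End_R(P) and End_R(Q) are isomorphic as R-algebras. Then P and Q are isomorphic as R-modules. In particular, if the matrix algebras M_m(R) and M_n(R) are isomorphic as R-algebras, then m = n. -/
/-!
Over a local ring a finitely generated projective module is free, and a free module of rank `r`
has an endomorphism algebra that is free of rank `r * r`. Hence an isomorphism of endomorphism
algebras forces equal ranks, and free modules of equal rank are isomorphic. The matrix statement
is the case `P = Fin m → R`, `Q = Fin n → R`, via `M_k(R) ≃ₐ[R] End_R(R^k)`.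
-/

open Module

theorem Module.free_of_isLocalRing_of_projective (R P : Type*) [CommRing R] [IsLocalRing R]
    [AddCommGroup P] [Module R P] [Module.Finite R P] [Projective R P] : Free R P :=
  have := finitePresentation_of_projective R P
  free_of_flat_of_isLocalRing

section FreeEnd

variable {R P Q : Type*} [CommRing R] [StrongRankCondition R]
  [AddCommGroup P] [Module R P] [Free R P] [Module.Finite R P]
  [AddCommGroup Q] [Module R Q] [Free R Q] [Module.Finite R Q]

theorem Module.finrank_eq_of_linearEquiv_end (e : End R P ≃ₗ[R] End R Q) :
    finrank R P = finrank R Q := by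
  have h := e.finrank_eq
  simp only [End, finrank_linearMap] at h
  exact Nat.mul_self_inj.mp h

theorem Module.nonempty_linearEquiv_of_linearEquiv_end (e : End R P ≃ₗ[R] End R Q) :
    Nonempty (P ≃ₗ[R] Q) :=
  FiniteDimensional.nonempty_linearEquiv_of_finrank_eq (finrank_eq_of_linearEquiv_end e)

end FreeEnd

/-- Over a commutative local ring, two finitely generated projective modules with isomorphic
endomorphism algebras are isomorphic; in particular `M_m(R) ≃ₐ[R] M_n(R)` forces `m = n`. -/
theorem statement5 {R : Type*} [CommRing R] [IsLocalRing R]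
    (P Q : Type*) [AddCommGroup P] [Module R P] [AddCommGroup Q] [Module R Q]
    [Module.Finite R P] [Module.Projective R P] [Module.Finite R Q] [Module.Projective R Q]
    (e : Module.End R P ≃ₐ[R] Module.End R Q) :
    Nonempty (P ≃ₗ[R] Q) ∧
      ∀ m n : ℕ, Nonempty (Matrix (Fin m) (Fin m) R ≃ₐ[R] Matrix (Fin n) (Fin n) R) → m = n := by
  have := free_of_isLocalRing_of_projective R P
  have := free_of_isLocalRing_of_projective R Q
  refine ⟨nonempty_linearEquiv_of_linearEquiv_end e.toLinearEquiv, ?_⟩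
  rintro m n ⟨f⟩
  let f' := Matrix.toLinAlgEquiv'.symm.trans (f.trans Matrix.toLinAlgEquiv')
  simpa using finrank_eq_of_linearEquiv_end f'.toLinearEquiv
end
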